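/- Let d ≥ 1, let k = (k_1,…,k_d) ∈ ℤᵈ, let x > 0, let φ ∈ ℝ, and let y_1, …, y_d > 0. Then the series (1/2π) · ∑_{m∈ℤ} e^{imφ} · j_m(x·y_1⋯y_d) · ∏_{l=1}^d j_{k_l+m}(x/y_l) converges absolutely and equals the integral ∫_{[0,2π]^d} exp( i·( 4πx·y_1⋯y_d·cos(θ_1+⋯+θ_d+φ) + ∑_{l=1}^d ( k_l·θ_l + 4πx·y_l^{−1}·cos θ_l ) ) ) dθ_1⋯dθ_d. -/

import Mathlib

/-!
By the Jacobi–Anger expansion, `exp(4πi s cos u) = (1/2π) ∑ₘ jₘ(s) e^{imu}`: the coefficients are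
the Fourier coefficients of a smooth `2π`-periodic function, so they decay like `1/m²` and the
Fourier series converges absolutely. Expanding the factor with `u = θ₁ + ⋯ + θ_d + φ`, the integrand
becomes an absolutely convergent series of functions `e^{imφ} ∏ₗ e^{i((kₗ + m)θₗ + 4πtₗ cos θₗ)}` in
separated variables, each bounded by `|jₘ(s)|/2π`. Integrating term by term and applying Fubini to
each product gives `∏ₗ j_{kₗ+m}(tₗ)`.
-/

open MeasureTheory

/-- `jint m t = ∫_0^{2π} exp(i(mθ + 4πt·cos θ)) dθ = 2π·iᵐ·J_m(4πt)`. -/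
noncomputable def jint (m : ℤ) (t : ℝ) : ℂ :=
  ∫ θ in (0 : ℝ)..(2 * Real.pi),
    Complex.exp (Complex.I * (((m : ℝ) * θ + 4 * Real.pi * t * Real.cos θ : ℝ) : ℂ))

open Complex Function
open scoped Real

theorem setIntegral_univ_pi_prod {ι 𝕜 : Type*} [Fintype ι] [RCLike 𝕜] {E : ι → Type*}
    [∀ i, MeasureSpace (E i)] [∀ i, SigmaFinite (volume : Measure (E i))]
    (s : (i : ι) → Set (E i)) (f : (i : ι) → E i → 𝕜) :
    ∫ x in Set.univ.pi s, ∏ i, f i (x i) = ∏ i, ∫ u in s i, f i u := by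
  rw [volume_pi, Measure.restrict_pi_pi, integral_fintype_prod_eq_prod]

theorem norm_fourierCoeffOn_le {a b : ℝ} {f : ℝ → ℂ} (hab : a < b) {C : ℝ}
    (hC : ∀ x ∈ Set.Icc a b, ‖f x‖ ≤ C) (n : ℤ) : ‖fourierCoeffOn hab f n‖ ≤ C := by
  have hba : 0 < b - a := sub_pos.mpr hab
  have : Fact (0 < b - a) := ⟨hba⟩
  rw [fourierCoeffOn_eq_integral, norm_smul]
  have hint := intervalIntegral.norm_integral_le_of_norm_le_const (a := a) (b := b) (C := C)
    (f := fun x => fourier (-n) (x : AddCircle (b - a)) • f x) fun x hx => by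
      rw [norm_smul, fourier_apply, Circle.norm_coe, one_mul]
      exact hC x (Set.Ioc_subset_Icc_self (by simpa [Set.uIoc_of_le hab.le] using hx))
  rw [abs_of_pos hba] at hint
  calc ‖1 / (b - a)‖ * _ ≤ 1 / (b - a) * (C * (b - a)) := by
        rw [Real.norm_of_nonneg (by positivity)]; gcongr
    _ = C := by field_simp

namespace Function.Periodic

variable {a b : ℝ} {f : ℝ → ℂ}

theorem periodic_deriv {c : ℝ} (hper : Periodic f c) : Periodic (deriv f) c := fun x => by
  rw [← deriv_comp_add_const, show (fun y => f (y + c)) = f from funext hper]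

theorem fourierCoeffOn_eq_mul_fourierCoeffOn_deriv (hab : a < b) (hf : ContDiff ℝ 1 f)
    (hper : Periodic f (b - a)) {n : ℤ} (hn : n ≠ 0) :
    fourierCoeffOn hab f n = (b - a) / (2 * π * I * n) * fourierCoeffOn hab (deriv f) n := by
  have hend : f b = f a := by simpa using hper a
  rw [fourierCoeffOn_of_hasDerivAt hab hn
    (fun x _ => (hf.differentiable one_ne_zero x).hasDerivAt)
    ((hf.continuous_deriv le_rfl).intervalIntegrable _ _), hend, sub_self, mul_zero,
    zero_sub]
  have : (n : ℂ) ≠ 0 := Int.cast_ne_zero.mpr hn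
  field_simp

theorem summable_norm_fourierCoeffOn (hab : a < b) (hf : ContDiff ℝ 2 f)
    (hper : Periodic f (b - a)) : Summable fun n => ‖fourierCoeffOn hab f n‖ := by
  have hf' : ContDiff ℝ 1 (deriv f) := (contDiff_succ_iff_deriv.mp hf).2.2
  obtain ⟨C, hC⟩ := isCompact_Icc.exists_bound_of_continuousOn
    (hf'.continuous_deriv le_rfl).continuousOn (s := Set.Icc a b)
  set K := ((b - a) / (2 * π)) ^ 2
  refine .of_norm_bounded_eventually
    ((Real.summable_one_div_int_pow.mpr one_lt_two).mul_left (K * C)) ?_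
  filter_upwards [Filter.eventually_cofinite_ne 0] with n hn
  have hcoeff : fourierCoeffOn hab f n =
      ((b - a) / (2 * π * I * n)) ^ 2 * fourierCoeffOn hab (deriv (deriv f)) n := by
    rw [hper.fourierCoeffOn_eq_mul_fourierCoeffOn_deriv hab hf.of_succ hn,
      hper.periodic_deriv.fourierCoeffOn_eq_mul_fourierCoeffOn_deriv hab hf' hn]
    ring
  have hnorm : ‖((b - a : ℂ) / (2 * π * I * n)) ^ 2‖ = K * (1 / (n : ℝ) ^ 2) := by
    rw [← ofReal_sub]
    simp only [K, norm_pow, norm_div, norm_mul, norm_real, norm_I, norm_intCast, norm_ofNat,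
      Real.norm_eq_abs, abs_of_pos (sub_pos.2 hab), abs_of_pos Real.pi_pos, div_pow, mul_pow,
      sq_abs]
    ring
  calc ‖‖fourierCoeffOn hab f n‖‖
        = K * (1 / (n : ℝ) ^ 2) * ‖fourierCoeffOn hab (deriv (deriv f)) n‖ := by
        rw [norm_norm, hcoeff, norm_mul, hnorm]
    _ ≤ K * (1 / (n : ℝ) ^ 2) * C := by gcongr; exact norm_fourierCoeffOn_le hab hC n
    _ = K * C * (1 / (n : ℝ) ^ 2) := by ring

theorem hasSum_fourierCoeffOn_mul_fourier (hab : a < b) (hf : ContDiff ℝ 2 f)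
    (hper : Periodic f (b - a)) (x : ℝ) :
    HasSum (fun n => fourierCoeffOn hab f n * fourier n (x : AddCircle (b - a))) (f x) := by
  have : Fact (0 < b - a) := ⟨sub_pos.mpr hab⟩
  let g : C(AddCircle (b - a), ℂ) := ⟨hper.lift, continuous_quot_lift _ hf.continuous⟩
  have hcoeff : fourierCoeff g = fourierCoeffOn hab f := funext fun n => by
    rw [fourierCoeffOn_eq_integral, fourierCoeff_eq_intervalIntegral _ _ a, add_sub_cancel]
    rfl
  have hsum : Summable (fourierCoeff g) :=
    hcoeff ▸ (summable_norm_fourierCoeffOn hab hf hper).of_norm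
  have h := has_pointwise_sum_fourier_series_of_summable hsum x
  rw [hcoeff] at h
  exact h

end Function.Periodic

noncomputable def expI (r : ℝ) : ℂ := cexp (I * r)

theorem expI_add (r s : ℝ) : expI (r + s) = expI r * expI s := by
  rw [expI, expI, expI, ← Complex.exp_add, ofReal_add, mul_add]

theorem norm_expI (r : ℝ) : ‖expI r‖ = 1 := by
  rw [expI, mul_comm, norm_exp_ofReal_mul_I]

theorem expI_sum {ι : Type*} (s : Finset ι) (f : ι → ℝ) :
    expI (∑ i ∈ s, f i) = ∏ i ∈ s, expI (f i) := by
  simp only [expI, ofReal_sum, Finset.mul_sum, Complex.exp_sum]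

theorem expI_int_mul_two_pi (m : ℤ) : expI (m * (2 * π)) = 1 := by
  rw [expI, show I * ((m * (2 * π) : ℝ) : ℂ) = m * (2 * π * I) by push_cast; ring]
  exact exp_int_mul_two_pi_mul_I m

theorem contDiff_expI {n : WithTop ℕ∞} : ContDiff ℝ n expI :=
  (contDiff_const.mul ofRealCLM.contDiff).cexp

theorem continuous_expI : Continuous expI :=
  contDiff_expI.continuous (n := 0)

-- `fourierCoeffOn` on `[0, 2π]` lives on `AddCircle (2 * π - 0)`, hence the odd period below.
theorem fourier_coe_two_pi_eq_expI (n : ℤ) (x : ℝ) :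
    fourier n (x : AddCircle (2 * π - 0)) = expI (n * x) := by
  rw [fourier_coe_apply, expI]
  congr 1
  push_cast
  field_simp
  ring

theorem jint_eq_integral_expI (m : ℤ) (t : ℝ) :
    jint m t = ∫ θ in (0 : ℝ)..2 * π, expI (m * θ + 4 * π * t * Real.cos θ) := rfl

theorem jint_neg (m : ℤ) (t : ℝ) : jint (-m) t = jint m t := by
  have hsub := intervalIntegral.integral_comp_sub_left
    (fun θ => expI (m * θ + 4 * π * t * Real.cos θ)) (2 * π) (a := 0) (b := 2 * π)
  rw [sub_self, sub_zero] at hsub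
  rw [jint_eq_integral_expI, jint_eq_integral_expI, ← hsub]
  refine intervalIntegral.integral_congr fun θ _ => ?_
  have harg : (m : ℝ) * (2 * π - θ) + 4 * π * t * Real.cos (2 * π - θ)
      = m * (2 * π) + (((-m : ℤ) : ℝ) * θ + 4 * π * t * Real.cos θ) := by
    rw [Real.cos_two_pi_sub]; push_cast; ring
  simp only [harg, expI_add, expI_int_mul_two_pi, one_mul]

theorem norm_jint_le (m : ℤ) (t : ℝ) : ‖jint m t‖ ≤ 2 * π := by
  rw [jint_eq_integral_expI]
  simpa [abs_of_pos Real.two_pi_pos] using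
    intervalIntegral.norm_integral_le_of_norm_le_const (a := 0) (b := 2 * π) (C := 1)
      fun θ _ => (norm_expI (m * θ + 4 * π * t * Real.cos θ)).le

theorem fourierCoeffOn_expI_cos (t : ℝ) (n : ℤ) :
    fourierCoeffOn Real.two_pi_pos (fun θ => expI (4 * π * t * Real.cos θ)) n =
      jint n t / (2 * π) := by
  rw [fourierCoeffOn_eq_integral, ← jint_neg, jint_eq_integral_expI]
  have hintegrand : ∀ θ : ℝ, fourier (-n) (θ : AddCircle (2 * π - 0)) •
      expI (4 * π * t * Real.cos θ) = expI ((-n : ℤ) * θ + 4 * π * t * Real.cos θ) := fun θ => by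
    rw [smul_eq_mul, fourier_coe_two_pi_eq_expI, ← expI_add]
  simp only [hintegrand, sub_zero, real_smul, ofReal_div, ofReal_one, ofReal_mul, ofReal_ofNat,
    one_div_mul_eq_div]

theorem periodic_expI_cos (t : ℝ) :
    Periodic (fun θ => expI (4 * π * t * Real.cos θ)) (2 * π - 0) := fun θ => by
  simp only [sub_zero, Real.cos_add_two_pi]

theorem contDiff_expI_cos (t : ℝ) : ContDiff ℝ 2 fun θ => expI (4 * π * t * Real.cos θ) :=
  contDiff_expI.comp (contDiff_const.mul Real.contDiff_cos)

theorem summable_norm_jint (t : ℝ) : Summable fun m => ‖jint m t‖ := by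
  have h := (periodic_expI_cos t).summable_norm_fourierCoeffOn Real.two_pi_pos
    (contDiff_expI_cos t)
  simp only [fourierCoeffOn_expI_cos, norm_div] at h
  exact (summable_div_const_iff (by simp [Real.pi_ne_zero])).mp h

theorem hasSum_jint_mul_expI (t θ : ℝ) :
    HasSum (fun m : ℤ => jint m t / (2 * π) * expI (m * θ)) (expI (4 * π * t * Real.cos θ)) := by
  simpa only [fourierCoeffOn_expI_cos, fourier_coe_two_pi_eq_expI] using
    (periodic_expI_cos t).hasSum_fourierCoeffOn_mul_fourier Real.two_pi_pos
      (contDiff_expI_cos t) θ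

section Torus

variable {ι : Type*} [Fintype ι]

theorem summable_norm_expI_mul_jint_mul_prod (k : ι → ℤ) (s φ : ℝ) (t : ι → ℝ) :
    Summable fun m : ℤ => ‖expI (m * φ) * jint m s * ∏ l, jint (k l + m) (t l)‖ := by
  refine ((summable_norm_jint s).mul_right ((2 * π) ^ Fintype.card ι)).of_nonneg_of_le
    (fun _ => norm_nonneg _) fun m => ?_
  rw [norm_mul, norm_mul, norm_expI, one_mul, norm_prod]
  gcongr
  exact (Finset.prod_le_prod (fun _ _ => norm_nonneg _) fun l _ => norm_jint_le _ _).trans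
    (Finset.prod_const _).le

theorem expI_mul_prod_expI_eq (k : ι → ℤ) (φ : ℝ) (t θ : ι → ℝ) (m : ℤ) :
    expI (m * φ) * ∏ l, expI ((k l + m : ℤ) * θ l + 4 * π * t l * Real.cos (θ l)) =
      expI (m * ((∑ l, θ l) + φ)) *
        expI (∑ l, ((k l : ℝ) * θ l + 4 * π * t l * Real.cos (θ l))) := by
  rw [← expI_sum, ← expI_add, ← expI_add]
  congr 1
  push_cast
  simp only [add_mul, Finset.sum_add_distrib, ← Finset.mul_sum]
  ring

theorem hasSum_setIntegral_expI (k : ι → ℤ) (s φ : ℝ) (t : ι → ℝ) :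
    HasSum (fun m : ℤ => (1 / (2 * π) : ℂ) * (expI (m * φ) * jint m s * ∏ l, jint (k l + m) (t l)))
      (∫ θ in Set.univ.pi fun _ => Set.Icc 0 (2 * π),
        expI (4 * π * s * Real.cos ((∑ l, θ l) + φ) +
          ∑ l, ((k l : ℝ) * θ l + 4 * π * t l * Real.cos (θ l)))) := by
  set box : Set (ι → ℝ) := Set.univ.pi fun _ => Set.Icc 0 (2 * π) with hbox
  let F : ℤ → (ι → ℝ) → ℂ := fun m θ => jint m s / (2 * π) * expI (m * φ) *
    ∏ l, expI ((k l + m : ℤ) * θ l + 4 * π * t l * Real.cos (θ l))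
  have hF_hasSum : ∀ θ, HasSum (F · θ) (expI (4 * π * s * Real.cos ((∑ l, θ l) + φ) +
      ∑ l, ((k l : ℝ) * θ l + 4 * π * t l * Real.cos (θ l)))) := fun θ => by
    rw [expI_add]
    refine ((hasSum_jint_mul_expI s _).mul_right _).congr_fun fun m => ?_
    simp only [F]
    rw [mul_assoc, expI_mul_prod_expI_eq, mul_assoc]
  have hF_norm : ∀ m θ, ‖F m θ‖ = ‖jint m s‖ / (2 * π) := fun m θ => by
    simp [F, norm_expI, norm_prod, abs_of_pos Real.pi_pos]
  have hF_integral : ∀ m, ∫ θ in box, F m θ =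
      (1 / (2 * π) : ℂ) * (expI (m * φ) * jint m s * ∏ l, jint (k l + m) (t l)) := fun m => by
    rw [integral_const_mul, hbox, setIntegral_univ_pi_prod _
      fun l u => expI ((k l + m : ℤ) * u + 4 * π * t l * Real.cos u)]
    simp only [integral_Icc_eq_integral_Ioc, ← intervalIntegral.integral_of_le Real.two_pi_pos.le,
      ← jint_eq_integral_expI]
    ring
  have hF_integrable : ∀ m, Integrable (F m) (volume.restrict box) := fun m =>
    ContinuousOn.integrableOn_compact (isCompact_univ_pi fun _ => isCompact_Icc)
      (continuous_const.mul (continuous_finsetProd _ fun l _ =>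
        continuous_expI.comp (by fun_prop))).continuousOn
  have hF_summable : Summable fun m => ∫ θ in box, ‖F m θ‖ := by
    simp only [hF_norm, setIntegral_const, smul_eq_mul]
    exact ((summable_norm_jint s).div_const _).mul_left _
  have h := hasSum_integral_of_summable_integral_norm hF_integrable hF_summable
  simp only [hF_integral, fun θ => (hF_hasSum θ).tsum_eq] at h
  exact h

end Torus

theorem stmt_17_general (d : ℕ) (k : Fin d → ℤ) (x : ℝ)
    (φ : ℝ) (y : Fin d → ℝ) :
    Summable (fun m : ℤ => ‖Complex.exp (Complex.I * (((m : ℝ) * φ : ℝ) : ℂ)) *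
      jint m (x * ∏ l, y l) * ∏ l, jint (k l + m) (x / y l)‖) ∧
    (1 / (2 * Real.pi) : ℂ) * ∑' m : ℤ, Complex.exp (Complex.I * (((m : ℝ) * φ : ℝ) : ℂ)) *
        jint m (x * ∏ l, y l) * ∏ l, jint (k l + m) (x / y l) =
      ∫ θ : Fin d → ℝ in Set.pi Set.univ fun _ => Set.Icc (0 : ℝ) (2 * Real.pi),
        Complex.exp (Complex.I *
          ((4 * Real.pi * x * (∏ l, y l) * Real.cos ((∑ l, θ l) + φ) +
            ∑ l, ((k l : ℝ) * θ l + 4 * Real.pi * x * (y l)⁻¹ * Real.cos (θ l)) : ℝ) : ℂ)) := by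
  refine ⟨summable_norm_expI_mul_jint_mul_prod k _ φ _, ?_⟩
  have h := hasSum_setIntegral_expI k (x * ∏ l, y l) φ (fun l => x / y l)
  rw [← tsum_mul_left]
  simp only [div_eq_mul_inv, ← mul_assoc] at h ⊢
  exact h.tsum_eq

/-- Fourier-series expansion of the torus integral `J_k(y; 2πx, φ)`: the series
`(1/2π) ∑_{m∈ℤ} e^{imφ} j_m(x·y_1⋯y_d) ∏_l j_{k_l+m}(x/y_l)` converges
absolutely and equals the integral over `[0,2π]^d` of
`exp(i(4πx·y_1⋯y_d·cos(θ_1+⋯+θ_d+φ) + ∑_l (k_l·θ_l + 4πx·y_l⁻¹·cos θ_l)))`. -/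
theorem stmt_17 (d : ℕ) (hd : 1 ≤ d) (k : Fin d → ℤ) (x : ℝ) (hx : 0 < x)
    (φ : ℝ) (y : Fin d → ℝ) (hy : ∀ l, 0 < y l) :
    Summable (fun m : ℤ => ‖Complex.exp (Complex.I * (((m : ℝ) * φ : ℝ) : ℂ)) *
      jint m (x * ∏ l, y l) * ∏ l, jint (k l + m) (x / y l)‖) ∧
    (1 / (2 * Real.pi) : ℂ) * ∑' m : ℤ, Complex.exp (Complex.I * (((m : ℝ) * φ : ℝ) : ℂ)) *
        jint m (x * ∏ l, y l) * ∏ l, jint (k l + m) (x / y l) =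
      ∫ θ : Fin d → ℝ in Set.pi Set.univ fun _ => Set.Icc (0 : ℝ) (2 * Real.pi),
        Complex.exp (Complex.I *
          ((4 * Real.pi * x * (∏ l, y l) * Real.cos ((∑ l, θ l) + φ) +
            ∑ l, ((k l : ℝ) * θ l + 4 * Real.pi * x * (y l)⁻¹ * Real.cos (θ l)) : ℝ) : ℂ)) :=
  stmt_17_general d k x φ y
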